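/- (Example 1.4, continued.) For k₂ ∈ {3/2, −1/2}, the natural Frobenius submanifold N = ι_{k₂}(ℂ²) of the B₃ Frobenius manifold is not totally geodesic: its second fundamental form is nonzero; concretely, with normal field ξ(τ) = (−2k₂τ₂, 1, 0) (which spans the η-orthogonal complement of T_pN) one has η(∂²ι_{k₂}/∂τ₂², ξ) = 2k₂ ≠ 0, so h(∂_{τ₂}, ∂_{τ₂}) ≠ 0 at every point. -/
import Mathlib


open scoped BigOperators Matrix

noncomputable section

/-- The flat metric `η` of `B₃`: `η₁₃ = η₃₁ = η₂₂ = 1`, all other entries `0`. -/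
def etaMat : Matrix (Fin 3) (Fin 3) ℂ :=
  !![0, 0, 1; 0, 1, 0; 1, 0, 0]

/-- The bilinear form associated with `η`. -/
def etaB (x y : Fin 3 → ℂ) : ℂ := ∑ i, ∑ j, etaMat i j * x i * y j

/-- The embedding `ι_{k₂}(τ₁,τ₂) = (τ₁ − (2/3)k₂²τ₂³, k₂τ₂², τ₂)` of
`I₂(6)`-type submanifolds into the `B₃` Frobenius manifold. -/
def iotaK (k2 : ℂ) (τ : Fin 2 → ℂ) : Fin 3 → ℂ :=
  ![τ 0 - (2 / 3) * k2 ^ 2 * (τ 1) ^ 3, k2 * (τ 1) ^ 2, τ 1]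

/-- The normal field `ξ(τ) = (−2k₂τ₂, 1, 0)`, spanning the `η`-orthogonal
complement of the tangent planes of `ι_{k₂}`. -/
def xiK (k2 : ℂ) (τ : Fin 2 → ℂ) : Fin 3 → ℂ :=
  ![-2 * k2 * τ 1, 1, 0]

/-- The ambient tangent field `∂_{τ₂}` of the surface `ι_{k₂}`. -/
def tau2Field (k2 : ℂ) (τ : Fin 2 → ℂ) : Fin 3 → ℂ :=
  fderiv ℂ (iotaK k2) τ (Pi.single 1 1)

/-- The second derivative `∂²ι_{k₂}/∂τ₂²`, i.e. `D_{∂_{τ₂}} ∂_{τ₂}` for the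
ambient flat connection. -/
def secondD (k2 : ℂ) (τ : Fin 2 → ℂ) : Fin 3 → ℂ :=
  fderiv ℂ (tau2Field k2) τ (Pi.single 1 1)

open ContinuousLinearMap in
/-- The derivative of `ι_{k₂}` at `w`, as an explicit continuous linear map. -/
def L1 (k2 : ℂ) (w : Fin 2 → ℂ) : (Fin 2 → ℂ) →L[ℂ] (Fin 3 → ℂ) :=
  ContinuousLinearMap.pi
    ![proj 0 - (2 * k2 ^ 2 * (w 1) ^ 2) • proj 1, (2 * k2 * w 1) • proj 1, proj 1]

open ContinuousLinearMap in
lemma hL1 (k2 : ℂ) (w : Fin 2 → ℂ) :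
    HasFDerivAt (iotaK k2) (L1 k2 w) w := by
  rw [hasFDerivAt_pi']
  intro i
  have h0 : HasFDerivAt (fun τ : Fin 2 → ℂ => τ 0)
      ((proj 0 : (Fin 2 → ℂ) →L[ℂ] ℂ)) w := hasFDerivAt_apply 0 w
  have h1 : HasFDerivAt (fun τ : Fin 2 → ℂ => τ 1)
      ((proj 1 : (Fin 2 → ℂ) →L[ℂ] ℂ)) w := hasFDerivAt_apply 1 w
  have hsq := h1.mul h1
  have hcube := hsq.mul h1
  fin_cases i
  · have := h0.sub ((hcube.const_mul ((2 / 3) * k2 ^ 2)))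
    refine HasFDerivAt.congr_fderiv (this.congr_of_eventuallyEq ?_) ?_
    · filter_upwards with τ
      simp [iotaK]
      exact Or.inl (by ring)
    · ext v; simp [L1]; ring
  · have := hsq.const_mul k2
    refine HasFDerivAt.congr_fderiv (this.congr_of_eventuallyEq ?_) ?_
    · filter_upwards with τ
      simp [iotaK]
      exact Or.inl (by ring)
    · ext v; simp [L1]; ring
  · refine HasFDerivAt.congr_fderiv (h1.congr_of_eventuallyEq ?_) ?_
    · filter_upwards with τ; simp [iotaK]
    · ext v; simp [L1]

lemma tau2Field_eq (k2 : ℂ) :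
    tau2Field k2 = fun τ => ![-2 * k2 ^ 2 * (τ 1) ^ 2, 2 * k2 * τ 1, 1] := by
  funext τ
  have h := (hL1 k2 τ).fderiv
  rw [tau2Field, h]
  funext i
  fin_cases i <;>
    simp [L1, Pi.single_apply] <;> ring

open ContinuousLinearMap in
/-- The derivative of `tau2Field k₂` at `w`. -/
def L2 (k2 : ℂ) (w : Fin 2 → ℂ) : (Fin 2 → ℂ) →L[ℂ] (Fin 3 → ℂ) :=
  ContinuousLinearMap.pi
    ![(-4 * k2 ^ 2 * w 1) • proj 1, (2 * k2) • proj 1, 0]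

open ContinuousLinearMap in
lemma hL2 (k2 : ℂ) (w : Fin 2 → ℂ) :
    HasFDerivAt (tau2Field k2) (L2 k2 w) w := by
  rw [tau2Field_eq, hasFDerivAt_pi']
  intro i
  have h1 : HasFDerivAt (fun τ : Fin 2 → ℂ => τ 1)
      ((proj 1 : (Fin 2 → ℂ) →L[ℂ] ℂ)) w := hasFDerivAt_apply 1 w
  have hsq := h1.mul h1
  fin_cases i
  · have := hsq.const_mul (-2 * k2 ^ 2)
    refine HasFDerivAt.congr_fderiv (this.congr_of_eventuallyEq ?_) ?_
    · filter_upwards with τ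
      simp
      exact Or.inl (by ring)
    · ext v; simp [L2]; ring
  · have := h1.const_mul (2 * k2)
    refine HasFDerivAt.congr_fderiv (this.congr_of_eventuallyEq ?_) ?_
    · filter_upwards with τ; simp
    · ext v; simp [L2]
  · refine HasFDerivAt.congr_fderiv (hasFDerivAt_const (1 : ℂ) w) ?_
    ext v; simp [L2]

lemma secondD_eq (k2 : ℂ) (w : Fin 2 → ℂ) :
    secondD k2 w = ![-4 * k2 ^ 2 * w 1, 2 * k2, 0] := by
  have h := (hL2 k2 w).fderiv
  rw [secondD, h]
  funext i
  fin_cases i <;>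
    simp [L2, Pi.single_apply] <;> ring

lemma tangent_orth (k2 : ℂ) (w : Fin 2 → ℂ) :
    ∀ y ∈ Set.range (fderiv ℂ (iotaK k2) w), etaB y (xiK k2 w) = 0 := by
  rintro y ⟨v, rfl⟩
  rw [(hL1 k2 w).fderiv]
  simp [etaB, etaMat, Fin.sum_univ_three, L1, xiK]
  ring

/-- Example 1.4 continued: for `k₂ ∈ {3/2, −1/2}` the natural Frobenius
submanifold `N = ι_{k₂}(ℂ²)` of `B₃` is not totally geodesic: with the normal
field `ξ(τ) = (−2k₂τ₂, 1, 0)` one has `η(∂²ι/∂τ₂², ξ) = 2k₂ ≠ 0`, so for any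
`η`-orthogonal projections `pr` onto the tangent planes the second fundamental
form satisfies `h(∂_{τ₂}, ∂_{τ₂}) = (∂²ι/∂τ₂²)^⊥ ≠ 0` at every point. -/
theorem example1_4_not_totally_geodesic (k2 : ℂ)
    (hk : k2 = 3 / 2 ∨ k2 = -(1 / 2))
    (pr : (Fin 2 → ℂ) → (Fin 3 → ℂ) →ₗ[ℂ] (Fin 3 → ℂ))
    (pr_mem : ∀ w x, pr w x ∈ Set.range (fderiv ℂ (iotaK k2) w))
    (pr_fix : ∀ w, ∀ x ∈ Set.range (fderiv ℂ (iotaK k2) w), pr w x = x)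
    (pr_orth : ∀ w (x : Fin 3 → ℂ), ∀ y ∈ Set.range (fderiv ℂ (iotaK k2) w),
      etaB (x - pr w x) y = 0) :
    ∀ w : Fin 2 → ℂ,
      etaB (secondD k2 w) (xiK k2 w) = 2 * k2 ∧
      (2 * k2 : ℂ) ≠ 0 ∧
      secondD k2 w - pr w (secondD k2 w) ≠ 0 := by
  intro w
  have hk0 : (2 * k2 : ℂ) ≠ 0 := by
    rcases hk with h | h <;> rw [h] <;> norm_num
  have hval : etaB (secondD k2 w) (xiK k2 w) = 2 * k2 := by
    rw [secondD_eq]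
    simp [etaB, etaMat, Fin.sum_univ_three, xiK]
  refine ⟨hval, hk0, ?_⟩
  intro hzero
  have heq : pr w (secondD k2 w) = secondD k2 w := by
    have := sub_eq_zero.mp hzero
    exact this.symm
  have hmem := pr_mem w (secondD k2 w)
  rw [heq] at hmem
  have := tangent_orth k2 w _ hmem
  rw [hval] at this
  exact hk0 this
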